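/- With the envelope PCA F̂ = F̂_{p,q} as above, for any translation-invariant probability measure μ on {0,?,1}^ℤ, F̂μ(?0?) = p·r²·(μ({0,?}²⟨***⟩) - μ(000⟨**⟩)), where μ({0,?}²⟨***⟩) is the μ-probability that two consecutive coordinates lie in {0,?} followed by a window of three coordinates in {0,?}³ \ {(0,0,0)}, and μ(000⟨**⟩) is the μ-probability of three consecutive 0s followed by two coordinates forming an element of {0,?}² \ {(0,0)}. -/

import Mathlib

open MeasureTheory

inductive PSym : Type
  | zero : PSym
  | quest : PSym
  | one : PSym
deriving DecidableEq

instance : Fintype PSym :=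
  ⟨{PSym.zero, PSym.quest, PSym.one}, fun x => by cases x <;> simp⟩

instance : MeasurableSpace PSym := ⊤

abbrev Config : Type := ℤ → PSym

open PSym

/-- the symbol lies in `{0, ?}` -/
def lowQ (a : PSym) : Prop := a = PSym.zero ∨ a = PSym.quest

instance : DecidablePred lowQ := fun a => by unfold lowQ; infer_instance

/-- the window `(η k, η (k+1))` lies in `{0,?}² \ {(0,0)}` -/
def star2 (η : Config) (k : ℤ) : Prop :=
  lowQ (η k) ∧ lowQ (η (k + 1)) ∧ ¬(η k = PSym.zero ∧ η (k + 1) = PSym.zero)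

/-- the window `(η k, η (k+1), η (k+2))` lies in `{0,?}³ \ {(0,0,0)}` -/
def star3 (η : Config) (k : ℤ) : Prop :=
  lowQ (η k) ∧ lowQ (η (k + 1)) ∧ lowQ (η (k + 2)) ∧
    ¬(η k = PSym.zero ∧ η (k + 1) = PSym.zero ∧ η (k + 2) = PSym.zero)

/-- translation by `k` -/
def shiftBy (k : ℤ) (η : Config) : Config := fun n => η (n + k)

/-- reflection -/
def reflect (η : Config) : Config := fun n => η (-n)

/-- the single-site stochastic update rule of the envelope PCA `F̂_{p,q}`:
`phi p q a b c d` is the probability that the output symbol is `d` when the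
neighbourhood reads `(a, b, c)`. -/
noncomputable def phi (p q : ℝ) (a b c d : PSym) : ℝ :=
  if a = PSym.zero ∧ b = PSym.zero ∧ c = PSym.zero then
    (if d = PSym.zero then p else if d = PSym.one then 1 - p else 0)
  else if lowQ a ∧ lowQ b ∧ lowQ c then
    (if d = PSym.zero then p else if d = PSym.one then q else 1 - p - q)
  else
    (if d = PSym.zero then 1 - q else if d = PSym.one then q else 0)

/-- `ν` is the pushforward of `μ` under the envelope PCA: the `ν`-probability of any
finite cylinder word is obtained by integrating, against `μ`, the product of the
single-site update probabilities (the sites being updated independently). -/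
def IsPushforward (p q : ℝ) (μ ν : Measure Config) : Prop :=
  ∀ (x : ℤ) (m : ℕ) (w : Fin m → PSym),
    (ν {η | ∀ i : Fin m, η (x + ((i : ℕ) : ℤ)) = w i}).toReal =
      ∫ η, (∏ i : Fin m,
        phi p q (η (x + ((i : ℕ) : ℤ))) (η (x + ((i : ℕ) : ℤ) + 1))
          (η (x + ((i : ℕ) : ℤ) + 2)) (w i)) ∂μ

/-!
The output `?0?` at sites `x, x+1, x+2` needs the windows at `x` and at `x+2` to lie in
`{0,?}³ \ {000}`; those two events already force the middle window into `{0,?}³`, where a `0`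
is written with probability `p`. So the update weight of `?0?` is `p r²` on that event and `0`
off it. The event `{0,?}²⟨***⟩` splits according to whether its first three letters are `000`:
the part where they are not is the event above, and the part where they are is `000⟨**⟩`,
since after a `0` the window `⟨***⟩` reduces to `⟨**⟩`.
-/

instance : DiscreteMeasurableSpace PSym := ⟨fun _ => trivial⟩

lemma phi_quest (p q : ℝ) (a b c : PSym) :
    phi p q a b c quest =
      if lowQ a ∧ lowQ b ∧ lowQ c ∧ ¬(a = zero ∧ b = zero ∧ c = zero) then 1 - p - q else 0 := by
  unfold phi
  split_ifs <;> simp_all [lowQ]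

lemma phi_zero_of_lowQ (p q : ℝ) {a b c : PSym} (ha : lowQ a) (hb : lowQ b) (hc : lowQ c) :
    phi p q a b c zero = p := by
  unfold phi
  split_ifs <;> simp_all

lemma star3_add_two_iff (η : Config) (x : ℤ) :
    star3 η (x + 2) ↔ lowQ (η (x + 2)) ∧ lowQ (η (x + 3)) ∧ lowQ (η (x + 4)) ∧
      ¬(η (x + 2) = zero ∧ η (x + 3) = zero ∧ η (x + 4) = zero) := by
  simp only [star3, add_assoc]
  norm_num

lemma measurable_star3 (k : ℤ) : Measurable fun η : Config => star3 η k := by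
  unfold star3 lowQ
  fun_prop

lemma star3_iff_star2_of_eq_zero {η : Config} {k : ℤ} (h : η k = zero) :
    star3 η k ↔ star2 η (k + 1) := by
  simp only [star3, star2, h, add_assoc]
  norm_num [lowQ]

lemma phi_quest_mul_phi_zero_mul_phi_quest (p q : ℝ) (η : Config) (x : ℤ) :
    phi p q (η x) (η (x + 1)) (η (x + 2)) quest * phi p q (η (x + 1)) (η (x + 2)) (η (x + 3)) zero *
        phi p q (η (x + 2)) (η (x + 3)) (η (x + 4)) quest =
      {η : Config | star3 η x ∧ star3 η (x + 2)}.indicator (fun _ => p * (1 - p - q) ^ 2) η := by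
  classical
  rw [phi_quest, phi_quest, Set.indicator_apply]
  simp only [Set.mem_ofPred_eq, star3_add_two_iff]
  split_ifs with h₁ h₂ h
  · rw [phi_zero_of_lowQ p q h₁.2.1 h₁.2.2.1 h₂.2.1]
    ring
  · exact absurd ⟨h₁, h₂⟩ h
  all_goals simp_all [star3]

lemma IsPushforward.measureReal_quest_zero_quest {p q : ℝ} {μ ν : Measure Config}
    (hν : IsPushforward p q μ ν) (x : ℤ) :
    ν.real {η | η x = quest ∧ η (x + 1) = zero ∧ η (x + 2) = quest} =
      p * (1 - p - q) ^ 2 * μ.real {η | star3 η x ∧ star3 η (x + 2)} := by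
  have hcyl : ν.real {η | η x = quest ∧ η (x + 1) = zero ∧ η (x + 2) = quest} =
      ∫ η, {η | star3 η x ∧ star3 η (x + 2)}.indicator (fun _ => p * (1 - p - q) ^ 2) η ∂μ := by
    simpa [measureReal_def, Fin.prod_univ_three, Fin.forall_fin_succ, add_assoc,
      phi_quest_mul_phi_zero_mul_phi_quest] using hν x 3 ![quest, zero, quest]
  rw [hcyl, integral_indicator_const _ ((measurable_star3 x).and (measurable_star3 (x + 2))).setOf,
    smul_eq_mul, mul_comm]

lemma measureReal_lowQ_lowQ_star3_eq_add (μ : Measure Config) [IsFiniteMeasure μ] (x : ℤ) :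
    μ.real {η | lowQ (η x) ∧ lowQ (η (x + 1)) ∧ star3 η (x + 2)} =
      μ.real {η | star3 η x ∧ star3 η (x + 2)} +
        μ.real {η | η x = zero ∧ η (x + 1) = zero ∧ η (x + 2) = zero ∧ star2 η (x + 3)} := by
  rw [← measureReal_inter_add_sdiff (t := {η | η x = zero ∧ η (x + 1) = zero ∧ η (x + 2) = zero})
    (by measurability), add_comm]
  congr 2 <;> ext η <;> simp only [Set.mem_ofPred_eq, Set.mem_inter_iff, Set.mem_sdiff]
  · simp only [star3]
    tauto
  · constructor
    · rintro ⟨⟨-, -, h⟩, h₀, h₁, h₂⟩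
      exact ⟨h₀, h₁, h₂, by simpa [add_assoc] using (star3_iff_star2_of_eq_zero h₂).1 h⟩
    · rintro ⟨h₀, h₁, h₂, h⟩
      refine ⟨⟨Or.inl h₀, Or.inl h₁, (star3_iff_star2_of_eq_zero h₂).2 ?_⟩, h₀, h₁, h₂⟩
      simpa [add_assoc] using h

theorem stmt14_general (p q : ℝ)
    (μ ν : Measure Config) [IsProbabilityMeasure μ]
    (hν : IsPushforward p q μ ν) :
    (ν {η | η 0 = quest ∧ η 1 = zero ∧ η 2 = quest}).toReal =
      p * (1 - p - q) ^ 2 *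
        ((μ {η | lowQ (η 0) ∧ lowQ (η 1) ∧ star3 η 2}).toReal -
          (μ {η | η 0 = zero ∧ η 1 = zero ∧ η 2 = zero ∧ star2 η 3}).toReal) := by
  have hν₀ := hν.measureReal_quest_zero_quest 0
  have hμ₀ := measureReal_lowQ_lowQ_star3_eq_add μ 0
  simp only [zero_add] at hν₀ hμ₀
  simp only [← measureReal_def, hν₀, hμ₀]
  ring

theorem stmt14 (p q : ℝ) (hp0 : 0 ≤ p) (hp1 : p ≤ 1) (hq0 : 0 ≤ q) (hq1 : q ≤ 1)
    (hpq : p + q ≤ 1)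
    (μ ν : Measure Config) [IsProbabilityMeasure μ] [IsProbabilityMeasure ν]
    (hshift : ∀ k : ℤ, Measure.map (shiftBy k) μ = μ)
    (hν : IsPushforward p q μ ν) :
    (ν {η | η 0 = quest ∧ η 1 = zero ∧ η 2 = quest}).toReal =
      p * (1 - p - q) ^ 2 *
        ((μ {η | lowQ (η 0) ∧ lowQ (η 1) ∧ star3 η 2}).toReal -
          (μ {η | η 0 = zero ∧ η 1 = zero ∧ η 2 = zero ∧ star2 η 3}).toReal) :=
  stmt14_general p q μ ν hν
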